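/- If X is metaLindelöf and strongly (n+1)-star Lindelöf, then X is n-star Lindelöf. -/
import Mathlib


open Set Filter Topology

/-- `𝒰` is an open cover of the space `X`. -/
def IsOpenCover {X : Type} [TopologicalSpace X] (𝒰 : Set (Set X)) : Prop :=
  (∀ u ∈ 𝒰, IsOpen u) ∧ ⋃₀ 𝒰 = Set.univ

/-- The star of a set `A` with respect to a collection `𝒰`. -/
def st {X : Type} (A : Set X) (𝒰 : Set (Set X)) : Set X :=
  ⋃₀ {u ∈ 𝒰 | (u ∩ A).Nonempty}
/-- The `n`-fold iterated star `St^n(A,𝒰)`. -/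
def iterSt {X : Type} : ℕ → Set X → Set (Set X) → Set X
  | 0, A, _ => A
  | n + 1, A, 𝒰 => st (iterSt n A 𝒰) 𝒰

/-- `X` is `n`-star Lindelöf. -/
def NStarLindelof (X : Type) [TopologicalSpace X] (n : ℕ) : Prop :=
  ∀ 𝒰 : Set (Set X), IsOpenCover 𝒰 →
    ∃ 𝒲 ⊆ 𝒰, 𝒲.Countable ∧ iterSt n (⋃₀ 𝒲) 𝒰 = Set.univ

/-- `X` is strongly `n`-star Lindelöf. -/
def StronglyNStarLindelof (X : Type) [TopologicalSpace X] (n : ℕ) : Prop :=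
  ∀ 𝒰 : Set (Set X), IsOpenCover 𝒰 →
    ∃ C : Set X, C.Countable ∧ iterSt n C 𝒰 = Set.univ

/-- `X` is metaLindelöf: every open cover has a point-countable open refinement. -/
def MetaLindelof (X : Type) [TopologicalSpace X] : Prop :=
  ∀ 𝒰 : Set (Set X), IsOpenCover 𝒰 →
    ∃ 𝒱 : Set (Set X), (∀ v ∈ 𝒱, IsOpen v) ∧ ⋃₀ 𝒱 = Set.univ ∧
      (∀ v ∈ 𝒱, ∃ u ∈ 𝒰, v ⊆ u) ∧ ∀ x : X, {v ∈ 𝒱 | x ∈ v}.Countable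


lemma iterSt_mono {X : Type} : ∀ (n : ℕ) (A B : Set X) (𝒱 𝒰 : Set (Set X)),
    A ⊆ B → (∀ v ∈ 𝒱, ∃ u ∈ 𝒰, v ⊆ u) → iterSt n A 𝒱 ⊆ iterSt n B 𝒰 := by
  intro n
  induction n with
  | zero => intro A B 𝒱 𝒰 hAB _; exact hAB
  | succ n ih =>
    intro A B 𝒱 𝒰 hAB href x hx
    obtain ⟨v, ⟨hv𝒱, y, hyv, hyA⟩, hxv⟩ := hx
    obtain ⟨u, hu𝒰, hvu⟩ := href v hv𝒱
    exact ⟨u, ⟨hu𝒰, y, hvu hyv, ih A B 𝒱 𝒰 hAB href hyA⟩, hvu hxv⟩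

lemma iterSt_succ_eq {X : Type} : ∀ (n : ℕ) (A : Set X) (𝒰 : Set (Set X)),
    iterSt (n + 1) A 𝒰 = iterSt n (st A 𝒰) 𝒰 := by
  intro n
  induction n with
  | zero => intro A 𝒰; rfl
  | succ n ih =>
    intro A 𝒰
    show st (iterSt (n+1) A 𝒰) 𝒰 = st (iterSt n (st A 𝒰) 𝒰) 𝒰
    rw [ih]

theorem stmt (X : Type) [TopologicalSpace X] (n : ℕ)
    (hmeta : MetaLindelof X) (h : StronglyNStarLindelof X (n + 1)) :
    NStarLindelof X n := by
  intro 𝒰 h𝒰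
  obtain ⟨𝒱, hVopen, hVcov, href, hpc⟩ := hmeta 𝒰 h𝒰
  obtain ⟨C, hCc, hCst⟩ := h 𝒱 ⟨hVopen, hVcov⟩
  set S : Set (Set X) := {v ∈ 𝒱 | (v ∩ C).Nonempty} with hS
  have hSc : S.Countable := by
    have : S ⊆ ⋃ c ∈ C, {v ∈ 𝒱 | c ∈ v} := by
      rintro v ⟨hv, c, hcv, hcC⟩
      exact Set.mem_biUnion hcC ⟨hv, hcv⟩
    exact (hCc.biUnion fun c _ => hpc c).mono this
  have hchoice : ∀ v : Set X, ∃ u, v ∈ S → u ∈ 𝒰 ∧ v ⊆ u := by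
    intro v
    by_cases hv : v ∈ S
    · obtain ⟨u, hu, hvu⟩ := href v hv.1
      exact ⟨u, fun _ => ⟨hu, hvu⟩⟩
    · exact ⟨∅, fun h => absurd h hv⟩
  choose f hf using hchoice
  set 𝒲 : Set (Set X) := f '' S with h𝒲
  have h𝒲sub : 𝒲 ⊆ 𝒰 := by rintro u ⟨v, hv, rfl⟩; exact (hf v hv).1
  have h𝒲c : 𝒲.Countable := hSc.image f
  have hstsub : st C 𝒱 ⊆ ⋃₀ 𝒲 := by
    rintro x ⟨v, hvS, hxv⟩
    exact ⟨f v, ⟨v, hvS, rfl⟩, (hf v hvS).2 hxv⟩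
  refine ⟨𝒲, h𝒲sub, h𝒲c, ?_⟩
  apply Set.eq_univ_of_univ_subset
  rw [← hCst, iterSt_succ_eq]
  exact iterSt_mono n (st C 𝒱) (⋃₀ 𝒲) 𝒱 𝒰 hstsub href
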